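/- Let m ≥ 3 be odd. Then the binary code C_{D_2} is minimal: for all (a,b), (a',b') ∈ F_{2^m} × F_{2^m} such that the codewords c(a,b) and c(a',b') are both nonzero, if the support of c(a',b') is contained in the support of c(a,b) (i.e., for every (x,y) ∈ D_2, Tr(a'xy + b'x) = 1 implies Tr(axy + bx) = 1), then c(a',b') = c(a,b) (i.e., Tr(a'xy + b'x) = Tr(axy + bx) for every (x,y) ∈ D_2). -/

import Mathlib

attribute [local instance] Classical.propDecidable

noncomputable instance (m : ℕ) : Fintype (GaloisField 2 m) := Fintype.ofFinite _

/-- The absolute trace map from `F_{2^m}` to `F_2`. -/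
noncomputable def Tr (m : ℕ) (x : GaloisField 2 m) : ZMod 2 :=
  Algebra.trace (ZMod 2) (GaloisField 2 m) x

/-- For `t ∈ F_2`, `sgn t` is the integer `(-1)^t`. -/
def sgn : ZMod 2 → ℤ := fun t => if t = 0 then 1 else -1

/-- The set `Υ₁ = {r + r⁻¹ : r ∈ F_{2^m}^*, r ≠ 1}`. -/
def Ups1 (m : ℕ) : Set (GaloisField 2 m) :=
  {u | ∃ r : GaloisField 2 m, r ≠ 0 ∧ r ≠ 1 ∧ u = r + r⁻¹}

/-! Over `𝔽₂`, the support of `c(a', b')` lies inside that of `c(a, b)` exactly when the supports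
of `c(a', b')` and of `c(a, b) + c(a', b') = c(a + a', b + b')` are disjoint, so it suffices that
any two nonzero codewords share a point of `D₂`. For `x ∉ {0, 1}` the fiber of `D₂` over `x` is
the affine hyperplane `Tr ((x² + 1) y) = Tr x`, on which `c(a, b)` has exactly `2 ^ (m - 2)` ones
unless `a x ∈ {0, x² + 1}`, where it is constant. Such degenerate fibers are rare (`a = 0`, or `x`
one of the two roots of `X² + a X + 1`), so a fiber where two given supports meet can be found by
counting. The borderline case `m = 3` needs two more facts: the elements of `𝔽_{2^m}` sum to `0`,
and for odd `m` the polynomial `X² + X + 1` has no root, as `Tr 1 = 1`. -/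

open Finset

lemma AddMonoidHom.card_fiber_mul_card_eq_of_surjective {G V : Type*} [AddGroup G] [Fintype G]
    [AddMonoid V] [Fintype V] (ψ : G →+ V) (hψ : Function.Surjective ψ) (v : V) :
    #{g | ψ g = v} * Fintype.card V = Fintype.card G := by
  calc #{g | ψ g = v} * Fintype.card V = ∑ w : V, #{g | ψ g = w} := by
        rw [sum_congr rfl fun w _ => AddMonoidHom.card_fiber_eq_of_mem_range ψ (hψ w) (hψ v),
          sum_const, card_univ, smul_eq_mul, mul_comm]
    _ = Fintype.card G := (card_eq_sum_card_fiberwise fun _ _ => mem_univ _).symm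

lemma AddSubgroup.eq_top_of_mem_fst_snd_add_eq_one {H : AddSubgroup (ZMod 2 × ZMod 2)}
    {p q r : ZMod 2 × ZMod 2} (hp : p ∈ H) (hq : q ∈ H) (hr : r ∈ H)
    (hp1 : p.1 = 1) (hq2 : q.2 = 1) (hr12 : r.1 + r.2 = 1) : H = ⊤ := by
  have span : ∀ p q r t : ZMod 2 × ZMod 2, p.1 = 1 → q.2 = 1 → r.1 + r.2 = 1 →
      t = 0 ∨ t = p ∨ t = q ∨ t = r ∨ t = p + q ∨ t = p + r ∨ t = q + r ∨ t = p + q + r := by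
    decide
  refine eq_top_iff.2 fun t _ => ?_
  rcases span p q r t hp1 hq2 hr12 with rfl | rfl | rfl | rfl | rfl | rfl | rfl | rfl <;>
    solve_by_elim [H.zero_mem, H.add_mem]

lemma GaloisField.card_eq_two_pow {m : ℕ} (hm : m ≠ 0) :
    Fintype.card (GaloisField 2 m) = 2 ^ m := by
  rw [← Nat.card_eq_fintype_card, GaloisField.card 2 m hm]

variable {m : ℕ}

@[simp]
lemma Tr_add (x y : GaloisField 2 m) : Tr m (x + y) = Tr m x + Tr m y :=
  map_add _ x y

@[simp]
lemma Tr_zero : Tr m 0 = 0 :=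
  map_zero _

lemma Tr_one (hodd : Odd m) : Tr m 1 = 1 := by
  have hm : m ≠ 0 := by rintro rfl; simp at hodd
  rw [Tr, ← map_one (algebraMap (ZMod 2) (GaloisField 2 m)), Algebra.trace_algebraMap,
    GaloisField.finrank 2 hm, nsmul_eq_mul, mul_one]
  obtain ⟨k, rfl⟩ := hodd
  push_cast
  rw [show (2 : ZMod 2) = 0 from rfl, zero_mul, zero_add]

lemma Tr_sq (x : GaloisField 2 m) : Tr m (x ^ 2) = Tr m x := by
  have := Algebra.trace_eq_of_algEquiv
    (FiniteField.frobeniusAlgEquivOfAlgebraic (ZMod 2) (GaloisField 2 m)) x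
  rwa [FiniteField.coe_frobeniusAlgEquivOfAlgebraic, ZMod.card] at this

lemma sq_add_self_add_one_ne_zero (hodd : Odd m) (r : GaloisField 2 m) : r ^ 2 + r + 1 ≠ 0 := by
  intro h
  have := congrArg (Tr m) h
  rw [Tr_add, Tr_add, Tr_sq, Tr_one hodd, CharTwo.add_self_eq_zero, zero_add, Tr_zero] at this
  exact one_ne_zero this

lemma exists_Tr_mul_eq_one {α : GaloisField 2 m} (hα : α ≠ 0) : ∃ z, Tr m (α * z) = 1 := by
  by_contra! h
  refine hα ((traceForm_nondegenerate (ZMod 2) (GaloisField 2 m)).1 α fun z => ?_)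
  exact (by decide : ∀ t : ZMod 2, t ≠ 1 → t = 0) _ (h z)

noncomputable def trMul (m : ℕ) (α : GaloisField 2 m) : GaloisField 2 m →+ ZMod 2 :=
  (Algebra.trace (ZMod 2) (GaloisField 2 m)).toAddMonoidHom.comp (AddMonoidHom.mulLeft α)

@[simp]
lemma trMul_apply (α z : GaloisField 2 m) : trMul m α z = Tr m (α * z) := rfl

lemma trMul_surjective {α : GaloisField 2 m} (hα : α ≠ 0) : Function.Surjective (trMul m α) := by
  obtain ⟨z, hz⟩ := exists_Tr_mul_eq_one hα
  intro c
  rcases (by decide : ∀ c : ZMod 2, c = 0 ∨ c = 1) c with rfl | rfl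
  exacts [⟨0, by simp⟩, ⟨z, hz⟩]

lemma card_filter_Tr_mul_eq (hm : m ≠ 0) {α : GaloisField 2 m} (hα : α ≠ 0) (c : ZMod 2) :
    #{z | Tr m (α * z) = c} = 2 ^ (m - 1) := by
  have h := AddMonoidHom.card_fiber_mul_card_eq_of_surjective _ (trMul_surjective hα) c
  rw [ZMod.card, GaloisField.card_eq_two_pow hm] at h
  obtain ⟨k, rfl⟩ := Nat.exists_eq_add_one_of_ne_zero hm
  rw [pow_succ] at h
  convert Nat.eq_of_mul_eq_mul_right two_pos h using 3 <;> simp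

lemma card_filter_Tr_mul_eq_and (hm : 2 ≤ m) {α β : GaloisField 2 m} (hα : α ≠ 0) (hβ : β ≠ 0)
    (hαβ : α ≠ β) (c d : ZMod 2) :
    #{z | Tr m (α * z) = c ∧ Tr m (β * z) = d} = 2 ^ (m - 2) := by
  have hsurj : Function.Surjective ((trMul m α).prod (trMul m β)) := by
    obtain ⟨u, hu⟩ := exists_Tr_mul_eq_one hα
    obtain ⟨v, hv⟩ := exists_Tr_mul_eq_one hβ
    obtain ⟨w, hw⟩ := exists_Tr_mul_eq_one (sub_ne_zero.2 hαβ)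
    rw [← AddMonoidHom.range_eq_top]
    refine AddSubgroup.eq_top_of_mem_fst_snd_add_eq_one ⟨u, rfl⟩ ⟨v, rfl⟩ ⟨w, rfl⟩ hu hv ?_
    simpa [CharTwo.sub_eq_add, add_mul] using hw
  have h := AddMonoidHom.card_fiber_mul_card_eq_of_surjective _ hsurj (c, d)
  rw [Fintype.card_prod, ZMod.card, GaloisField.card_eq_two_pow (by omega)] at h
  obtain ⟨k, rfl⟩ := Nat.exists_eq_add_of_le' hm
  rw [pow_add] at h
  convert Nat.eq_of_mul_eq_mul_right (by norm_num) h using 3 <;> simp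

lemma four_le_two_pow_sub_one (hm : 3 ≤ m) : 4 ≤ 2 ^ (m - 1) :=
  (Nat.pow_le_pow_right two_pos (by omega) : 2 ^ 2 ≤ 2 ^ (m - 1))

lemma sq_add_one_ne_zero {x : GaloisField 2 m} (hx : x ≠ 1) : x ^ 2 + 1 ≠ 0 := by
  rw [← one_pow 2, ← CharTwo.add_sq]
  exact pow_ne_zero 2 fun h => hx (CharTwo.add_eq_zero.1 h)

noncomputable def quadRoots (m : ℕ) (c : GaloisField 2 m) : Finset (GaloisField 2 m) :=
  {x | x ^ 2 + c * x + 1 = 0}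

section quadRoots

variable {a c r x : GaloisField 2 m}

lemma mem_quadRoots : x ∈ quadRoots m c ↔ x ^ 2 + c * x + 1 = 0 := by
  simp [quadRoots]

lemma ne_zero_of_mem_quadRoots (hx : x ∈ quadRoots m c) : x ≠ 0 := by
  rintro rfl
  simp [mem_quadRoots] at hx

lemma eq_add_inv_of_mem_quadRoots (hr : r ∈ quadRoots m c) : c = r + r⁻¹ := by
  have hrr : r * r⁻¹ = 1 := mul_inv_cancel₀ (ne_zero_of_mem_quadRoots hr)
  linear_combination r⁻¹ * mem_quadRoots.1 hr + (-r - c) * hrr -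
    (r + r⁻¹) * (CharTwo.two_eq_zero (R := GaloisField 2 m))

lemma one_notMem_quadRoots (hc : c ≠ 0) : 1 ∉ quadRoots m c := fun h =>
  hc (by simpa [CharTwo.add_self_eq_zero] using eq_add_inv_of_mem_quadRoots h)

lemma quadRoots_subset (hr : r ∈ quadRoots m c) : quadRoots m c ⊆ {r, r⁻¹} := by
  intro x hx
  have hrr : r * r⁻¹ = 1 := mul_inv_cancel₀ (ne_zero_of_mem_quadRoots hr)
  have : (x + r) * (x + r⁻¹) = 0 := by
    linear_combination mem_quadRoots.1 hx - x * eq_add_inv_of_mem_quadRoots hr + hrr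
  rcases mul_eq_zero.1 this with h | h <;> simp [CharTwo.add_eq_zero.1 h]

lemma card_quadRoots_le_two : #(quadRoots m c) ≤ 2 := by
  rcases (quadRoots m c).eq_empty_or_nonempty with h | ⟨r, hr⟩
  · simp [h]
  · exact (card_le_card (quadRoots_subset hr)).trans card_le_two

lemma sum_quadRoots (h : #(quadRoots m c) = 2) : ∑ x ∈ quadRoots m c, x = c := by
  obtain ⟨r, hr⟩ : (quadRoots m c).Nonempty := card_pos.1 (by omega)
  have heq : quadRoots m c = {r, r⁻¹} :=
    eq_of_subset_of_card_le (quadRoots_subset hr) (card_le_two.trans h.ge)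
  have hne : r ≠ r⁻¹ := by
    rintro hrr
    simp [heq, ← hrr] at h
  rw [heq, sum_pair hne, eq_add_inv_of_mem_quadRoots hr]

lemma disjoint_quadRoots {c' : GaloisField 2 m} (h : c ≠ c') :
    Disjoint (quadRoots m c) (quadRoots m c') :=
  disjoint_left.2 fun _ hx hx' =>
    h ((eq_add_inv_of_mem_quadRoots hx).trans (eq_add_inv_of_mem_quadRoots hx').symm)

-- The kernel of `x ↦ Tr (c x)` is a subgroup of at least four elements, while `0`, `1` and the two
-- roots `r, r⁻¹` of `X ^ 2 + a X + 1` are only four; so it would be `{0, 1, r, r⁻¹}`, forcing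
-- `1 + r = r⁻¹`, which is impossible for odd `m`.
lemma exists_Tr_mul_eq_zero_of_notMem_quadRoots (hm : 3 ≤ m) (hodd : Odd m) (ha : a ≠ 0)
    (c : GaloisField 2 m) : ∃ x, x ≠ 0 ∧ x ≠ 1 ∧ x ∉ quadRoots m a ∧ Tr m (c * x) = 0 := by
  by_contra! h
  set K : Finset (GaloisField 2 m) := {x | Tr m (c * x) = 0} with hK
  have hmem : ∀ {z}, z ∈ K ↔ Tr m (c * z) = 0 := by simp [hK]
  have hK4 : 4 ≤ #K := by
    rcases eq_or_ne c 0 with rfl | hc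
    · have : K = univ := by ext; simp [hK]
      rw [this, card_univ, GaloisField.card_eq_two_pow (by omega)]
      exact (four_le_two_pow_sub_one hm).trans (Nat.pow_le_pow_right two_pos (by omega))
    · rw [hK, card_filter_Tr_mul_eq (by omega) hc]
      exact four_le_two_pow_sub_one hm
  have hKsub : K ⊆ {0, 1} ∪ quadRoots m a := fun x hx => by
    by_contra hx'
    simp only [mem_union, mem_insert, mem_singleton, not_or] at hx'
    exact h x hx'.1.1 hx'.1.2 hx'.2 (hmem.1 hx)
  obtain ⟨r, hr⟩ : (quadRoots m a).Nonempty := by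
    rw [nonempty_iff_ne_empty]
    rintro hR
    rw [hR, union_empty] at hKsub
    have := (card_le_card hKsub).trans card_le_two
    omega
  have hKeq : K = {0, 1, r, r⁻¹} := by
    refine eq_of_subset_of_card_le (hKsub.trans ?_) (card_le_four.trans hK4)
    refine union_subset (by intro z; simp; tauto) ((quadRoots_subset hr).trans ?_)
    intro z; simp; tauto
  have h1r : 1 + r ∈ K := by
    rw [hmem, mul_add, Tr_add, hmem.1 (by simp [hKeq]), hmem.1 (by simp [hKeq]), add_zero]
  have hr₀ := ne_zero_of_mem_quadRoots hr
  simp only [hKeq, mem_insert, mem_singleton, add_eq_left, add_eq_right,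
    CharTwo.add_eq_zero] at h1r
  rcases h1r with rfl | rfl | h | h
  · exact one_notMem_quadRoots ha hr
  · exact hr₀ rfl
  · exact one_ne_zero h
  · refine sq_add_self_add_one_ne_zero hodd r ?_
    have hrr : r * r⁻¹ = 1 := mul_inv_cancel₀ hr₀
    linear_combination r * h + hrr + (CharTwo.two_eq_zero (R := GaloisField 2 m))

-- Otherwise the three disjoint root sets, of at most two elements each, would cover the
-- `2 ^ m - 2 ≥ 6` elements other than `0` and `1`; then `m = 3`, and comparing sums gives
-- `1 = a₁ + a₂ + (a₁ + a₂) = 0`.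
lemma exists_notMem_quadRoots_three (hm : 3 ≤ m) {a₁ a₂ : GaloisField 2 m} (ha₁ : a₁ ≠ 0)
    (ha₂ : a₂ ≠ 0) (h₁₂ : a₁ ≠ a₂) :
    ∃ x, x ≠ 0 ∧ x ≠ 1 ∧ x ∉ quadRoots m a₁ ∧ x ∉ quadRoots m a₂ ∧ x ∉ quadRoots m (a₁ + a₂) := by
  by_contra! h
  have hd₁₂ := disjoint_quadRoots h₁₂
  have hd : Disjoint (quadRoots m a₁ ∪ quadRoots m a₂) (quadRoots m (a₁ + a₂)) :=
    disjoint_union_left.2 ⟨disjoint_quadRoots fun h => ha₂ (by linear_combination -h),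
      disjoint_quadRoots fun h => ha₁ (by linear_combination -h)⟩
  set S : Finset (GaloisField 2 m) := univ \ {0, 1}
  set R := quadRoots m a₁ ∪ quadRoots m a₂ ∪ quadRoots m (a₁ + a₂)
  have hSR : S ⊆ R := fun x hx => by
    simp only [S, mem_sdiff, mem_univ, mem_insert, mem_singleton, not_or, true_and] at hx
    by_cases h₁ : x ∈ quadRoots m a₁
    · simp [R, h₁]
    by_cases h₂ : x ∈ quadRoots m a₂
    · simp [R, h₂]
    simp [R, h x hx.1 hx.2 h₁ h₂]
  have hcardS : #S = 2 ^ m - 2 := by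
    rw [card_sdiff_of_subset (subset_univ _), card_univ, GaloisField.card_eq_two_pow (by omega),
      card_pair zero_ne_one]
  have hcardR : #R = #(quadRoots m a₁) + #(quadRoots m a₂) + #(quadRoots m (a₁ + a₂)) := by
    rw [card_union_of_disjoint hd, card_union_of_disjoint hd₁₂]
  have h8 : 8 ≤ 2 ^ m := (Nat.pow_le_pow_right two_pos hm : 2 ^ 3 ≤ 2 ^ m)
  have hR₁ := card_quadRoots_le_two (m := m) (c := a₁)
  have hR₂ := card_quadRoots_le_two (m := m) (c := a₂)
  have hR₃ := card_quadRoots_le_two (m := m) (c := a₁ + a₂)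
  have hle := card_le_card hSR
  have hsumS : ∑ x ∈ S, x = 1 := by
    have huniv : ∑ x : GaloisField 2 m, x = 0 := by
      simpa using FiniteField.sum_pow_lt_card_sub_one (GaloisField 2 m) 1
        (by rw [GaloisField.card_eq_two_pow (by omega)]; omega)
    rw [← sum_sdiff (subset_univ {0, 1}), sum_pair zero_ne_one, zero_add] at huniv
    exact CharTwo.add_eq_zero.1 huniv
  have hsumR : ∑ x ∈ R, x = 0 := by
    rw [sum_union hd, sum_union hd₁₂, sum_quadRoots (by omega), sum_quadRoots (by omega),
      sum_quadRoots (by omega), CharTwo.add_eq_zero]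
  rw [eq_of_subset_of_card_le hSR (by omega), hsumR] at hsumS
  exact zero_ne_one hsumS

end quadRoots

/-- `(x, y)` lies in the support of the codeword `c(a, b)` of `C_{D₂}`. -/
def InSupport (m : ℕ) (a b x y : GaloisField 2 m) : Prop :=
  x ≠ 0 ∧ Tr m (y * x ^ 2 + x + y) = 0 ∧ Tr m (a * x * y + b * x) = 1

noncomputable def fiberSupport (m : ℕ) (a b x : GaloisField 2 m) : Finset (GaloisField 2 m) :=
  {y | InSupport m a b x y}

section support

variable {a b x y : GaloisField 2 m}

lemma Tr_D₂_eq_zero_iff : Tr m (y * x ^ 2 + x + y) = 0 ↔ Tr m ((x ^ 2 + 1) * y) = Tr m x := by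
  rw [show y * x ^ 2 + x + y = (x ^ 2 + 1) * y + x by ring, Tr_add, CharTwo.add_eq_zero]

lemma Tr_codeword_add (a₁ b₁ a₂ b₂ x y : GaloisField 2 m) :
    Tr m ((a₁ + a₂) * x * y + (b₁ + b₂) * x) =
      Tr m (a₁ * x * y + b₁ * x) + Tr m (a₂ * x * y + b₂ * x) := by
  rw [← Tr_add]
  ring_nf

lemma mem_fiberSupport : y ∈ fiberSupport m a b x ↔ InSupport m a b x y := by
  simp [fiberSupport]

lemma ne_zero_of_inSupport_zero (h : InSupport m 0 b x y) : b ≠ 0 := by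
  rintro rfl
  simpa using h.2.2

lemma inSupport_add_of_not_inSupport {a₁ b₁ a₂ b₂ : GaloisField 2 m}
    (h₁ : InSupport m a₁ b₁ x y) (h₂ : ¬InSupport m a₂ b₂ x y) :
    InSupport m (a₁ + a₂) (b₁ + b₂) x y := by
  have h₂' : Tr m (a₂ * x * y + b₂ * x) = 0 :=
    (by decide : ∀ t : ZMod 2, t ≠ 1 → t = 0) _ fun h => h₂ ⟨h₁.1, h₁.2.1, h⟩
  exact ⟨h₁.1, h₁.2.1, by rw [Tr_codeword_add, h₁.2.2, h₂', add_zero]⟩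

lemma card_fiberSupport (hm : 2 ≤ m) (hx₀ : x ≠ 0) (hx₁ : x ≠ 1) (ha : a ≠ 0)
    (hxa : x ∉ quadRoots m a) : #(fiberSupport m a b x) = 2 ^ (m - 2) := by
  have hne : x ^ 2 + 1 ≠ a * x := fun h => hxa (mem_quadRoots.2 (by
    linear_combination h + a * x * (CharTwo.two_eq_zero (R := GaloisField 2 m))))
  rw [← card_filter_Tr_mul_eq_and hm (sq_add_one_ne_zero hx₁) (mul_ne_zero ha hx₀) hne (Tr m x)
    (1 + Tr m (b * x))]
  refine congrArg card (filter_congr fun y _ => ?_)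
  rw [InSupport, Tr_D₂_eq_zero_iff, Tr_add, CharTwo.add_eq_iff_eq_add]
  exact and_iff_right hx₀

lemma fiberSupport_nonempty (hm : 2 ≤ m) (hx₀ : x ≠ 0) (hx₁ : x ≠ 1) (ha : a ≠ 0)
    (hxa : x ∉ quadRoots m a) : (fiberSupport m a b x).Nonempty := by
  rw [← card_pos, card_fiberSupport hm hx₀ hx₁ ha hxa]
  positivity

end support

section commonSupport

variable {a₁ a₂ b₁ b₂ : GaloisField 2 m}

lemma exists_inSupport_zero_zero (hm : 3 ≤ m) (hb₁ : b₁ ≠ 0) (hb₂ : b₂ ≠ 0) :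
    ∃ x y, InSupport m 0 b₁ x y ∧ InSupport m 0 b₂ x y := by
  have hcard : #({1} : Finset (GaloisField 2 m)) <
      #{x | Tr m (b₁ * x) = 1 ∧ Tr m (b₂ * x) = 1} := by
    rw [card_singleton]
    rcases eq_or_ne b₁ b₂ with rfl | hne
    · simp only [and_self]
      rw [card_filter_Tr_mul_eq (by omega) hb₁]
      exact Nat.one_lt_two_pow (by omega)
    · rw [card_filter_Tr_mul_eq_and (by omega) hb₁ hb₂ hne]
      exact Nat.one_lt_two_pow (by omega)
  obtain ⟨x, hx, hx₁⟩ := exists_mem_notMem_of_card_lt_card hcard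
  simp only [mem_filter, mem_univ, true_and] at hx
  rw [mem_singleton] at hx₁
  have hx₀ : x ≠ 0 := by rintro rfl; simp at hx
  obtain ⟨y, hy⟩ := trMul_surjective (sq_add_one_ne_zero hx₁) (Tr m x)
  have hD : Tr m (y * x ^ 2 + x + y) = 0 := Tr_D₂_eq_zero_iff.2 hy
  exact ⟨x, y, ⟨hx₀, hD, by simpa using hx.1⟩, ⟨hx₀, hD, by simpa using hx.2⟩⟩

lemma exists_inSupport_zero_left (hm : 3 ≤ m) (hb₁ : b₁ ≠ 0) (ha₂ : a₂ ≠ 0) :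
    ∃ x y, InSupport m 0 b₁ x y ∧ InSupport m a₂ b₂ x y := by
  have hcard : #(insert 1 (quadRoots m a₂)) < #{x | Tr m (b₁ * x) = 1} := by
    rw [card_filter_Tr_mul_eq (by omega) hb₁]
    have := (card_insert_le 1 (quadRoots m a₂)).trans
      (Nat.add_le_add_right card_quadRoots_le_two 1)
    have := four_le_two_pow_sub_one hm
    omega
  obtain ⟨x, hx, hx'⟩ := exists_mem_notMem_of_card_lt_card hcard
  simp only [mem_filter, mem_univ, true_and] at hx
  simp only [mem_insert, not_or] at hx'
  have hx₀ : x ≠ 0 := by rintro rfl; simp at hx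
  obtain ⟨y, hy⟩ := fiberSupport_nonempty (b := b₂) (by omega) hx₀ hx'.1 ha₂ hx'.2
  rw [mem_fiberSupport] at hy
  exact ⟨x, y, ⟨hx₀, hy.2.1, by simpa using hx⟩, hy⟩

lemma exists_inSupport_of_eq (hm : 3 ≤ m) (hodd : Odd m) (ha : a₁ ≠ 0) :
    ∃ x y, InSupport m a₁ b₁ x y ∧ InSupport m a₁ b₂ x y := by
  obtain ⟨x, hx₀, hx₁, hxa, hTr⟩ :=
    exists_Tr_mul_eq_zero_of_notMem_quadRoots hm hodd ha (b₁ + b₂)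
  obtain ⟨y, hy⟩ := fiberSupport_nonempty (b := b₁) (by omega) hx₀ hx₁ ha hxa
  rw [mem_fiberSupport] at hy
  refine ⟨x, y, hy, hx₀, hy.2.1, ?_⟩
  have := Tr_codeword_add a₁ b₁ 0 (b₁ + b₂) x y
  rwa [add_zero, ← add_assoc, CharTwo.add_self_eq_zero, zero_add, hy.2.2, zero_mul, zero_mul,
    zero_add, hTr, add_zero] at this

-- On a fiber where `c(a₁, b₁)`, `c(a₂, b₂)` and their sum all have `2 ^ (m - 2)` ones, disjoint
-- supports of the first two would both lie in the support of the sum.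
lemma exists_inSupport_of_ne (hm : 3 ≤ m) (ha₁ : a₁ ≠ 0) (ha₂ : a₂ ≠ 0) (h₁₂ : a₁ ≠ a₂) :
    ∃ x y, InSupport m a₁ b₁ x y ∧ InSupport m a₂ b₂ x y := by
  obtain ⟨x, hx₀, hx₁, hx₁', hx₂', hx₃'⟩ := exists_notMem_quadRoots_three hm ha₁ ha₂ h₁₂
  by_contra! hdisj
  have hsub : fiberSupport m a₁ b₁ x ∪ fiberSupport m a₂ b₂ x ⊆
      fiberSupport m (a₁ + a₂) (b₁ + b₂) x := by
    intro y hy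
    rw [mem_union, mem_fiberSupport, mem_fiberSupport] at hy
    rw [mem_fiberSupport]
    rcases hy with hy | hy
    · exact inSupport_add_of_not_inSupport hy (hdisj x y hy)
    · rw [add_comm a₁, add_comm b₁]
      exact inSupport_add_of_not_inSupport hy fun h => hdisj x y h hy
  have hd : Disjoint (fiberSupport m a₁ b₁ x) (fiberSupport m a₂ b₂ x) :=
    disjoint_left.2 fun y h₁ h₂ => hdisj x y (mem_fiberSupport.1 h₁) (mem_fiberSupport.1 h₂)
  have hle := card_le_card hsub
  rw [card_union_of_disjoint hd, card_fiberSupport (by omega) hx₀ hx₁ ha₁ hx₁',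
    card_fiberSupport (by omega) hx₀ hx₁ ha₂ hx₂',
    card_fiberSupport (by omega) hx₀ hx₁ (fun h => h₁₂ (CharTwo.add_eq_zero.1 h)) hx₃'] at hle
  have : 0 < 2 ^ (m - 2) := by positivity
  omega

theorem exists_inSupport_inSupport (hm : 3 ≤ m) (hodd : Odd m)
    (h₁ : ∃ x y, InSupport m a₁ b₁ x y) (h₂ : ∃ x y, InSupport m a₂ b₂ x y) :
    ∃ x y, InSupport m a₁ b₁ x y ∧ InSupport m a₂ b₂ x y := by
  obtain ⟨x₁, y₁, h₁⟩ := h₁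
  obtain ⟨x₂, y₂, h₂⟩ := h₂
  rcases eq_or_ne a₁ 0 with rfl | ha₁ <;> rcases eq_or_ne a₂ 0 with rfl | ha₂
  · exact exists_inSupport_zero_zero hm (ne_zero_of_inSupport_zero h₁)
      (ne_zero_of_inSupport_zero h₂)
  · exact exists_inSupport_zero_left hm (ne_zero_of_inSupport_zero h₁) ha₂
  · obtain ⟨x, y, h, h'⟩ := exists_inSupport_zero_left hm (ne_zero_of_inSupport_zero h₂) ha₁
    exact ⟨x, y, h', h⟩
  · rcases eq_or_ne a₁ a₂ with rfl | h₁₂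
    · exact exists_inSupport_of_eq hm hodd ha₁
    · exact exists_inSupport_of_ne hm ha₁ ha₂ h₁₂

end commonSupport

theorem stmt17_general (m : ℕ) (hm : 3 ≤ m) (hodd : Odd m) (a b a' b' : GaloisField 2 m)
    (hne' : ∃ x y : GaloisField 2 m, x ≠ 0 ∧ Tr m (y * x ^ 2 + x + y) = 0 ∧
      Tr m (a' * x * y + b' * x) = 1)
    (hsupp : ∀ x y : GaloisField 2 m, x ≠ 0 → Tr m (y * x ^ 2 + x + y) = 0 →
      Tr m (a' * x * y + b' * x) = 1 → Tr m (a * x * y + b * x) = 1) :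
    ∀ x y : GaloisField 2 m, x ≠ 0 → Tr m (y * x ^ 2 + x + y) = 0 →
      Tr m (a' * x * y + b' * x) = Tr m (a * x * y + b * x) := by
  intro x y hx hD
  by_contra hne
  have hsum : InSupport m (a' + a) (b' + b) x y :=
    ⟨hx, hD, by rw [Tr_codeword_add]; exact (by decide : ∀ s t : ZMod 2, s ≠ t → s + t = 1) _ _ hne⟩
  obtain ⟨x', y', h', hsum'⟩ := exists_inSupport_inSupport hm hodd hne' ⟨x, y, hsum⟩
  have h := hsum'.2.2
  rw [Tr_codeword_add, h'.2.2, hsupp x' y' h'.1 h'.2.1 h'.2.2] at h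
  exact absurd h (by decide)

theorem stmt17 (m : ℕ) (hm : 3 ≤ m) (hodd : Odd m) (a b a' b' : GaloisField 2 m)
    (hne : ∃ x y : GaloisField 2 m, x ≠ 0 ∧ Tr m (y * x ^ 2 + x + y) = 0 ∧
      Tr m (a * x * y + b * x) = 1)
    (hne' : ∃ x y : GaloisField 2 m, x ≠ 0 ∧ Tr m (y * x ^ 2 + x + y) = 0 ∧
      Tr m (a' * x * y + b' * x) = 1)
    (hsupp : ∀ x y : GaloisField 2 m, x ≠ 0 → Tr m (y * x ^ 2 + x + y) = 0 →
      Tr m (a' * x * y + b' * x) = 1 → Tr m (a * x * y + b * x) = 1) :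
    ∀ x y : GaloisField 2 m, x ≠ 0 → Tr m (y * x ^ 2 + x + y) = 0 →
      Tr m (a' * x * y + b' * x) = Tr m (a * x * y + b * x) :=
  stmt17_general m hm hodd a b a' b' hne' hsupp
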